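/- The FC-transform (η, w) ↦ (z, w) with z = η - w\bar{η} pulls the Kähler form of the Siegel–Jacobi disk back to a product form: substituting z = η - w\bar{η} into ω_{kμ} = i[2k (1-w\bar{w})^{-2} dw∧d\bar{w} + μ(1-w\bar{w})^{-1} A∧\bar{A}], A = dz + \bar{η}dw (where η = (z+\bar{z}w)/(1-w\bar{w})), yields ω_{kμ}(η,w) = i[2k(1-w\bar{w})^{-2} dw∧d\bar{w} + μ dη∧d\bar{η}]. In particular, under z = η - w\bar{η}, A = dη - w d\bar{η} and A∧\bar{A} = (1-w\bar{w}) dη∧d\bar{η}. -/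

import Mathlib

open Complex

/-! Under `z = η - w η̄` the `dw`-terms of `A = dz + η̄ dw` cancel, so `A = dη - w dη̄`. Since
`dη ∧ dη = dη̄ ∧ dη̄ = 0` and `dη̄ ∧ dη = -dη ∧ dη̄`, the product `A ∧ Ā` collapses to
`(1 - w w̄) dη ∧ dη̄`, and the factor `1 - w w̄` cancels the `(1 - w w̄)⁻¹` in front of it. -/

theorem ExteriorAlgebra.ι_sub_smul_mul_ι_sub_smul {R M : Type*} [CommRing R] [AddCommGroup M]
    [Module R M] (x y : M) (a b : R) :
    (ι R x - a • ι R y) * (ι R y - b • ι R x) = (1 - a * b) • (ι R x * ι R y) := by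
  have hyx : ι R y * ι R x = -(ι R x * ι R y) :=
    eq_neg_of_add_eq_zero_right (ι_add_mul_swap x y)
  simp only [sub_mul, mul_sub, smul_mul_assoc, mul_smul_comm, ι_sq_zero, hyx,
    smul_zero, smul_neg]
  module

theorem Complex.one_sub_mul_conj_ne_zero {w : ℂ} (hw : ‖w‖ < 1) : 1 - w * starRingEnd ℂ w ≠ 0 := by
  rw [mul_conj, sub_ne_zero, ← ofReal_one, Ne, ofReal_inj, normSq_eq_norm_sq]
  nlinarith [norm_nonneg w]

theorem siegelJacobi_FC_kahler_general (k μ : ℝ)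
    (η w : ℂ) (hw : ‖w‖ < 1) :
    let V := Fin 4 → ℂ
    let ι := ExteriorAlgebra.ι ℂ (M := V)
    let dη := ι (Pi.single 0 1)
    let dηb := ι (Pi.single 1 1)
    let dw := ι (Pi.single 2 1)
    let dwb := ι (Pi.single 3 1)
    let P : ℂ := 1 - w * starRingEnd ℂ w
    -- the pullback of dz under z = η - w η̄
    let dz := dη - w • dηb - (starRingEnd ℂ η) • dw
    let A := dz + (starRingEnd ℂ η) • dw
    let Ab := dηb - (starRingEnd ℂ w) • dη - η • dwb + η • dwb
    (A = dη - w • dηb) ∧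
    (A * Ab = (1 - w * starRingEnd ℂ w) • (dη * dηb)) ∧
    (Complex.I • ((2 * (k : ℂ) / P ^ 2) • (dw * dwb) + ((μ : ℂ) / P) • (A * Ab)) =
      Complex.I • ((2 * (k : ℂ) / P ^ 2) • (dw * dwb) + (μ : ℂ) • (dη * dηb))) := by
  intro V ι dη dηb dw dwb P dz A Ab
  have hA : A = dη - w • dηb := sub_add_cancel _ _
  have hAb : Ab = dηb - starRingEnd ℂ w • dη := sub_add_cancel _ _
  have hAAb : A * Ab = P • (dη * dηb) := by
    rw [hA, hAb]
    exact ExteriorAlgebra.ι_sub_smul_mul_ι_sub_smul _ _ _ _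
  refine ⟨hA, hAAb, ?_⟩
  rw [hAAb, smul_smul, div_mul_cancel₀ _ (one_sub_mul_conj_ne_zero hw)]

/-- The FC-transform `(η,w) ↦ (z,w)`, `z = η - w η̄`, pulls the Kähler form of the
Siegel–Jacobi disk back to a product form. We work in the exterior algebra generated by
the differentials `dη, dη̄, dw, dw̄`: under `z = η - w η̄` one has
`dz = dη - w dη̄ - η̄ dw`, hence `A = dz + η̄ dw = dη - w dη̄`,
`A∧Ā = (1-w w̄) dη∧dη̄`, and
`i[2k P⁻² dw∧dw̄ + μ P⁻¹ A∧Ā] = i[2k P⁻² dw∧dw̄ + μ dη∧dη̄]`. -/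
theorem siegelJacobi_FC_kahler (k μ : ℝ) (hk : 0 < k) (hμ : 0 < μ)
    (η w : ℂ) (hw : ‖w‖ < 1) :
    let V := Fin 4 → ℂ
    let ι := ExteriorAlgebra.ι ℂ (M := V)
    let dη := ι (Pi.single 0 1)
    let dηb := ι (Pi.single 1 1)
    let dw := ι (Pi.single 2 1)
    let dwb := ι (Pi.single 3 1)
    let P : ℂ := 1 - w * starRingEnd ℂ w
    -- the pullback of dz under z = η - w η̄
    let dz := dη - w • dηb - (starRingEnd ℂ η) • dw
    let A := dz + (starRingEnd ℂ η) • dw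
    let Ab := dηb - (starRingEnd ℂ w) • dη - η • dwb + η • dwb
    (A = dη - w • dηb) ∧
    (A * Ab = (1 - w * starRingEnd ℂ w) • (dη * dηb)) ∧
    (Complex.I • ((2 * (k : ℂ) / P ^ 2) • (dw * dwb) + ((μ : ℂ) / P) • (A * Ab)) =
      Complex.I • ((2 * (k : ℂ) / P ^ 2) • (dw * dwb) + (μ : ℂ) • (dη * dηb))) :=
  siegelJacobi_FC_kahler_general k μ η w hw
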